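/- With Ψ⁻¹(A,B) := ∑_{j=0}^{B−1} A^j, let D ≥ 1, d : [D] → ℕ₊, K := ∑ d(ℓ), 0 < r ≤ 1, h : [D] → ℝ nondecreasing and nonnegative. Then E_U[R(U)] ≤ C, where C := ∑_{ℓ=1}^{D} h(ℓ) r^{d_{[ℓ+1:D]}} Ψ⁻¹(r, d(ℓ)), R(u) := ∑_{ℓ=1}^{u−1} h(ℓ) r^{d_{[ℓ+1:D]}} Ψ⁻¹(r, d(ℓ)) + h(u) Ψ⁻¹(r, d_{[u:D]}), and U has distribution P[U = u] = d(u)/K. -/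

import Mathlib

/-- `Ψ⁻¹(A, B) = ∑_{j=0}^{B−1} A^j`. -/
noncomputable def psiInv (A : ℝ) (B : ℕ) : ℝ := ∑ j ∈ Finset.range B, A ^ j

/-- `d_{[a:b]} = ∑_{t=a}^{b} d(t)` (0 if `a > b`). -/
def dSum (d : ℕ → ℕ) (a b : ℕ) : ℕ := ∑ t ∈ Finset.Icc a b, d t

/-!
Writing `c(ℓ) = r^{d_{[ℓ+1:D]}} Ψ⁻¹(r, d(ℓ))`, the geometric sum over the block `[u:D]` splits
as `Ψ⁻¹(r, d_{[u:D]}) = ∑_{ℓ=u}^{D} c(ℓ)`. Hence `R(u) = ∑_{ℓ<u} h(ℓ) c(ℓ) + ∑_{ℓ≥u} h(u) c(ℓ)`,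
and since `h` is nondecreasing and `c ≥ 0`, every `R(u)` is at most `C = ∑_ℓ h(ℓ) c(ℓ)`;
so is any average of the `R(u)`.
-/

open Finset

lemma psiInv_add (r : ℝ) (m n : ℕ) : psiInv r (m + n) = psiInv r m + r ^ m * psiInv r n := by
  simp only [psiInv, sum_range_add, pow_add, mul_sum]

lemma psiInv_nonneg {r : ℝ} (hr : 0 ≤ r) (n : ℕ) : 0 ≤ psiInv r n :=
  sum_nonneg fun j _ => pow_nonneg hr j

lemma dSum_eq_add_dSum_succ (d : ℕ → ℕ) {a b : ℕ} (hab : a ≤ b) :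
    dSum d a b = d a + dSum d (a + 1) b := by
  rw [dSum, dSum, ← insert_Icc_add_one_left_eq_Icc hab, sum_insert (by simp)]

lemma psiInv_dSum (r : ℝ) (d : ℕ → ℕ) (a b : ℕ) :
    psiInv r (dSum d a b) = ∑ ℓ ∈ Icc a b, r ^ dSum d (ℓ + 1) b * psiInv r (d ℓ) := by
  induction hk : b + 1 - a generalizing a with
  | zero => simp [dSum, psiInv, Icc_eq_empty_of_lt (show b < a by omega)]
  | succ k ih =>
    have hab : a ≤ b := by omega
    rw [← insert_Icc_add_one_left_eq_Icc hab, sum_insert (by simp), ← ih (a + 1) (by omega),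
      dSum_eq_add_dSum_succ d hab, add_comm (d a), psiInv_add, add_comm]

lemma mul_psiInv_dSum_le {r : ℝ} (hr : 0 ≤ r) (d : ℕ → ℕ) {h : ℕ → ℝ} {u D : ℕ}
    (hmono : MonotoneOn h (Set.Icc u D)) :
    h u * psiInv r (dSum d u D) ≤ ∑ ℓ ∈ Icc u D, h ℓ * r ^ dSum d (ℓ + 1) D * psiInv r (d ℓ) := by
  rw [psiInv_dSum, mul_sum]
  refine sum_le_sum fun ℓ hℓ => ?_
  obtain ⟨huℓ, hℓD⟩ := mem_Icc.mp hℓ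
  rw [mul_assoc (h ℓ)]
  exact mul_le_mul_of_nonneg_right (hmono ⟨le_rfl, huℓ.trans hℓD⟩ ⟨huℓ, hℓD⟩ huℓ)
    (mul_nonneg (pow_nonneg hr _) (psiInv_nonneg hr _))

lemma sum_Icc_pred_add_mul_psiInv_dSum_le {r : ℝ} (hr : 0 ≤ r) (d : ℕ → ℕ) {h : ℕ → ℝ}
    {u D : ℕ} (hmono : MonotoneOn h (Set.Icc 1 D)) (hu : u ∈ Icc 1 D) :
    ∑ ℓ ∈ Icc 1 (u - 1), h ℓ * r ^ dSum d (ℓ + 1) D * psiInv r (d ℓ)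
        + h u * psiInv r (dSum d u D)
      ≤ ∑ ℓ ∈ Icc 1 D, h ℓ * r ^ dSum d (ℓ + 1) D * psiInv r (d ℓ) := by
  obtain ⟨hu1, huD⟩ := mem_Icc.mp hu
  have hsplit (f : ℕ → ℝ) :
      ∑ ℓ ∈ Icc 1 (u - 1), f ℓ + ∑ ℓ ∈ Icc u D, f ℓ = ∑ ℓ ∈ Icc 1 D, f ℓ := by
    have hIoc := sum_Ioc_consecutive f (Nat.zero_le (u - 1)) (show u - 1 ≤ D by omega)
    rwa [← Icc_add_one_left_eq_Ioc, ← Icc_add_one_left_eq_Ioc, ← Icc_add_one_left_eq_Ioc,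
      zero_add, Nat.sub_add_cancel hu1] at hIoc
  rw [← hsplit]
  exact add_le_add le_rfl (mul_psiInv_dSum_le hr d (hmono.mono (Set.Icc_subset_Icc_left hu1)))

lemma sum_div_sum_mul_le {ι : Type*} {s : Finset ι} {w f : ι → ℝ} {C : ℝ}
    (hw : ∀ i ∈ s, 0 ≤ w i) (hW : 0 < ∑ i ∈ s, w i) (hf : ∀ i ∈ s, f i ≤ C) :
    ∑ i ∈ s, w i / (∑ j ∈ s, w j) * f i ≤ C :=
  calc ∑ i ∈ s, w i / (∑ j ∈ s, w j) * f i
      ≤ ∑ i ∈ s, w i / (∑ j ∈ s, w j) * C :=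
        sum_le_sum fun i hi => mul_le_mul_of_nonneg_left (hf i hi) (div_nonneg (hw i hi) hW.le)
    _ = C := by rw [← sum_mul, ← sum_div, div_self hW.ne', one_mul]

theorem stmt7_general (D : ℕ) (hD : 1 ≤ D) (d : ℕ → ℕ)
    (hd : ∀ ℓ ∈ Finset.Icc 1 D, 1 ≤ d ℓ)
    (K : ℕ) (hK : K = dSum d 1 D)
    (r : ℝ) (hr0 : 0 < r) (h : ℕ → ℝ)
    (hmono : ∀ i ∈ Finset.Icc 1 D, ∀ j ∈ Finset.Icc 1 D, i ≤ j → h i ≤ h j) :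
    ∑ u ∈ Finset.Icc 1 D, ((d u : ℝ) / (K : ℝ)) *
        (∑ ℓ ∈ Finset.Icc 1 (u - 1), h ℓ * r ^ dSum d (ℓ + 1) D * psiInv r (d ℓ)
          + h u * psiInv r (dSum d u D))
      ≤ ∑ ℓ ∈ Finset.Icc 1 D, h ℓ * r ^ dSum d (ℓ + 1) D * psiInv r (d ℓ) := by
  have hK : (K : ℝ) = ∑ u ∈ Icc 1 D, (d u : ℝ) := by rw [hK, dSum, Nat.cast_sum]
  have hKpos : 0 < ∑ u ∈ Icc 1 D, (d u : ℝ) :=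
    sum_pos (fun ℓ hℓ => Nat.cast_pos.mpr (hd ℓ hℓ)) ⟨1, mem_Icc.mpr ⟨le_rfl, hD⟩⟩
  have hmono : MonotoneOn h (Set.Icc 1 D) := fun i hi j hj hij =>
    hmono i (mem_Icc.mpr hi) j (mem_Icc.mpr hj) hij
  rw [hK]
  exact sum_div_sum_mul_le (fun u _ => Nat.cast_nonneg _) hKpos
    fun u hu => sum_Icc_pred_add_mul_psiInv_dSum_le hr0.le d hmono hu

/-- `C*_PIR-PNSI ≤ C_PIR-PNSI`: with `P[U = u] = d(u)/K`,
`E_U[R(U)] ≤ C = ∑_{ℓ=1}^{D} h(ℓ) r^{d_{[ℓ+1:D]}} Ψ⁻¹(r,d(ℓ))`. -/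
theorem stmt7 (D : ℕ) (hD : 1 ≤ D) (d : ℕ → ℕ)
    (hd : ∀ ℓ ∈ Finset.Icc 1 D, 1 ≤ d ℓ)
    (K : ℕ) (hK : K = dSum d 1 D)
    (r : ℝ) (hr0 : 0 < r) (hr1 : r ≤ 1) (h : ℕ → ℝ)
    (hmono : ∀ i ∈ Finset.Icc 1 D, ∀ j ∈ Finset.Icc 1 D, i ≤ j → h i ≤ h j)
    (hpos : ∀ ℓ ∈ Finset.Icc 1 D, 0 ≤ h ℓ) :
    ∑ u ∈ Finset.Icc 1 D, ((d u : ℝ) / (K : ℝ)) *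
        (∑ ℓ ∈ Finset.Icc 1 (u - 1), h ℓ * r ^ dSum d (ℓ + 1) D * psiInv r (d ℓ)
          + h u * psiInv r (dSum d u D))
      ≤ ∑ ℓ ∈ Finset.Icc 1 D, h ℓ * r ^ dSum d (ℓ + 1) D * psiInv r (d ℓ) :=
  stmt7_general D hD d hd K hK r hr0 h hmono
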